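/- For every z ∈ ℂ^n with z ≠ 0, let H_z = {w ∈ ℂ^n : Σ_{j=1}^{n} z_j w_j = 0}. Then the ω-symplectic orthogonal complement of H_z equals the complex line spanned by the coordinatewise conjugate vector conj(z): {u ∈ ℂ^n : ω(u,w) = 0 for all w ∈ H_z} = {c · conj(z) : c ∈ ℂ}. This identifies the horizontal distribution defining symplectic parallel transport in the model Lefschetz fibration. -/

import Mathlib

/-!
`ω` is the imaginary part of the Hermitian inner product and `H_z` is the Hermitian orthogonal
complement of `conj z`. Since `H_z` is a complex subspace, `Im ⟪u, w⟫ = 0` on `H_z` forces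
`Re ⟪u, w⟫ = Im ⟪u, i w⟫ = 0` as well, so the `ω`-complement of `H_z` is its Hermitian
complement `(ℂ ∙ conj z)ᗮᗮ = ℂ ∙ conj z`.
-/

open scoped BigOperators

noncomputable section

/-- The standard symplectic form on `ℂⁿ`: `ω(u,v) = Σ_j Im(conj(u_j) · v_j)`. -/
def omegaC (n : ℕ) (u v : EuclideanSpace ℂ (Fin n)) : ℝ :=
  ∑ j : Fin n, ((starRingEnd ℂ) (u j) * v j).im

/-- `H_z = ker(dq_z) = {w : Σ_j z_j w_j = 0}`. -/
def Hker (n : ℕ) (z : EuclideanSpace ℂ (Fin n)) : Set (EuclideanSpace ℂ (Fin n)) :=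
  {w | ∑ j : Fin n, z j * w j = 0}

/-- The coordinatewise complex conjugate of `z ∈ ℂⁿ`. -/
def conjVec (n : ℕ) (z : EuclideanSpace ℂ (Fin n)) : EuclideanSpace ℂ (Fin n) :=
  WithLp.toLp 2 (fun j => (starRingEnd ℂ) (z j))

section ImInner

variable {E : Type*} [NormedAddCommGroup E] [InnerProductSpace ℂ E]

theorem inner_eq_zero_of_im_inner_eq_zero {K : Submodule ℂ E} {u : E}
    (h : ∀ w ∈ K, (inner ℂ u w).im = 0) {w : E} (hw : w ∈ K) : inner ℂ u w = 0 := by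
  have hre : (inner ℂ u w).re = 0 := by
    simpa [inner_smul_right] using h (Complex.I • w) (K.smul_mem _ hw)
  exact Complex.ext hre (h w hw)

theorem setOf_forall_im_inner_eq_zero (K : Submodule ℂ E) :
    {u : E | ∀ w ∈ K, (inner ℂ u w).im = 0} = Kᗮ := by
  ext u
  refine ⟨fun h w hw => ?_, fun hu w hw => ?_⟩
  · rw [← inner_conj_symm, inner_eq_zero_of_im_inner_eq_zero h hw, map_zero]
  · rw [Submodule.inner_left_of_mem_orthogonal hw hu, Complex.zero_im]

end ImInner

theorem omegaC_eq_im_inner (n : ℕ) (u w : EuclideanSpace ℂ (Fin n)) :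
    omegaC n u w = (inner ℂ u w).im := by
  simp only [omegaC, PiLp.inner_apply, RCLike.inner_apply, Complex.im_sum, mul_comm]

theorem Hker_eq_orthogonal_conjVec (n : ℕ) (z : EuclideanSpace ℂ (Fin n)) :
    Hker n z = (ℂ ∙ conjVec n z)ᗮ := by
  ext w
  simp [Hker, Submodule.mem_orthogonal_singleton_iff_inner_right, PiLp.inner_apply,
    RCLike.inner_apply, conjVec, mul_comm]

theorem stmt_14_general (n : ℕ) (z : EuclideanSpace ℂ (Fin n)) :
    {u : EuclideanSpace ℂ (Fin n) | ∀ w ∈ Hker n z, omegaC n u w = 0} =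
      Set.range (fun c : ℂ => c • conjVec n z) := by
  simp_rw [omegaC_eq_im_inner, Hker_eq_orthogonal_conjVec, SetLike.mem_coe,
    setOf_forall_im_inner_eq_zero, Submodule.orthogonal_orthogonal]
  rw [Submodule.span_singleton_eq_range]

/-- For `z ≠ 0`, the `ω`-symplectic orthogonal complement of `H_z` is the complex line
spanned by `conj(z)`: the horizontal distribution of the model Lefschetz fibration. -/
theorem stmt_14 (n : ℕ) (hn : 1 ≤ n) (z : EuclideanSpace ℂ (Fin n)) (hz : z ≠ 0) :
    {u : EuclideanSpace ℂ (Fin n) | ∀ w ∈ Hker n z, omegaC n u w = 0} =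
      Set.range (fun c : ℂ => c • conjVec n z) :=
  stmt_14_general n z
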